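/- Let ∅ ≠ A ⊆ R̃^d be internal and sharply bounded, let (A_ε)_ε be a sharply bounded representative of A, and let u = [(u_ε)_ε] ∈ G̃(A). Then u ∈ G̃^∞(A) if and only if there exists N ∈ ℕ such that for every multi-index α, sup_{x ∈ A_ε} |∂^α u_ε(x)| ≤ ε^{-N} for all sufficiently small ε. -/

import Mathlib

/-!
If all derivatives of `u_ε` are bounded by `ε^{-N}` uniformly on `A_ε`, take a point `[x_ε]` of
`A` and `y_ε ∈ A_ε` with `x ~ y`. The mean value theorem on the segment `[x_ε, y_ε]` bounds
`‖D^n u_ε(x_ε) - D^n u_ε(y_ε)‖` by `‖D^{n+1} u_ε(z_ε)‖ ‖x_ε - y_ε‖`, where `z_ε` maximises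
`‖D^{n+1} u_ε‖` on the segment. Since `z ~ y`, the net `z` again represents a point of `A`, so that
factor is moderate while `‖x_ε - y_ε‖` is negligible.

Conversely, if no single `N` works, then for every `N` some derivative order `n_N` exceeds
`ε^{-N}` at points of `A_ε` for arbitrarily small `ε`. Picking such `ε` along one sequence that
serves every `N` infinitely often and filling in the other `ε` with points of `A_ε` gives a net
in `A_ε`, hence (as `(A_ε)` is sharply bounded) a point of `A`, at which the `n_{N+1}`-th
derivative is not bounded by `ρ^{-N}`, whatever `N`.
-/

open Real Set Metric MeasureTheory Filter

noncomputable section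

/-- `P ε` holds for all sufficiently small `ε ∈ (0,1)`. -/
def EvSmall (P : ℝ → Prop) : Prop :=
  ∃ ε₀ : ℝ, 0 < ε₀ ∧ ε₀ < 1 ∧ ∀ ε : ℝ, 0 < ε → ε ≤ ε₀ → P ε

/-- A net `(u_ε)` with values in a seminormed group is moderate. -/
def Moderate {E : Type*} [SeminormedAddGroup E] (u : ℝ → E) : Prop :=
  ∃ N : ℕ, EvSmall fun ε => ‖u ε‖ ≤ ε ^ (-(N : ℝ))

/-- A net `(u_ε)` is negligible. -/
def Negligible {E : Type*} [SeminormedAddGroup E] (u : ℝ → E) : Prop :=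
  ∀ m : ℕ, EvSmall fun ε => ‖u ε‖ ≤ ε ^ (m : ℝ)

/-- Two nets represent the same generalized point. -/
def EqvNet {E : Type*} [SeminormedAddGroup E] (x y : ℝ → E) : Prop :=
  Negligible fun ε => x ε - y ε

/-- The set of generalized points of `Ẽ` (modelled as the moderate nets). -/
def GenPt (E : Type*) [SeminormedAddGroup E] : Set (ℝ → E) := {x | Moderate x}

/-- `x` is a representative of some generalized point belonging to `A`. -/
def IsReprOfPointOf {E : Type*} [SeminormedAddGroup E] (A : Set (ℝ → E)) (x : ℝ → E) : Prop :=
  Moderate x ∧ ∃ a ∈ A, EqvNet x a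

/-- The sharp norm `e^{-v(x)}` of a (moderate) net. -/
noncomputable def sharpNorm {E : Type*} [SeminormedAddGroup E] (x : ℝ → E) : ℝ :=
  sInf {r : ℝ | ∃ b : ℝ, r = Real.exp (-b) ∧ EvSmall fun ε => ‖x ε‖ ≤ ε ^ b}

/-- `A` is open for the sharp topology (as a set of generalized points). -/
def SharpOpen {E : Type*} [SeminormedAddGroup E] (A : Set (ℝ → E)) : Prop :=
  (∀ x ∈ A, Moderate x) ∧
  ∀ x ∈ A, ∃ r > 0, ∀ y : ℝ → E, Moderate y →
    sharpNorm (fun ε => y ε - x ε) < r → y ∈ A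

/-- `B` is a sharp neighbourhood of `A`. -/
def IsSharpNbhdOf {E : Type*} [SeminormedAddGroup E] (B A : Set (ℝ → E)) : Prop :=
  A ⊆ B ∧ ∀ x ∈ A, ∃ r > 0, ∀ y : ℝ → E, Moderate y →
    sharpNorm (fun ε => y ε - x ε) < r → y ∈ B

/-- The internal set with representative `(Aε)`. -/
def InternalSet {E : Type*} [SeminormedAddGroup E] (Aε : ℝ → Set E) : Set (ℝ → E) :=
  {x | Moderate x ∧ ∃ y : ℝ → E, EqvNet x y ∧ EvSmall fun ε => y ε ∈ Aε ε}

/-- `(Aε)` is a sharply bounded representative. -/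
def SharplyBddRep {E : Type*} [SeminormedAddGroup E] (Aε : ℝ → Set E) : Prop :=
  ∃ M : ℕ, EvSmall fun ε => ∀ x ∈ Aε ε, ‖x‖ ≤ ε ^ (-(M : ℝ))

/-- A set of generalized points is sharply bounded. -/
def SharplyBddSet {E : Type*} [SeminormedAddGroup E] (A : Set (ℝ → E)) : Prop :=
  ∃ C : ℝ, ∀ x ∈ A, sharpNorm x ≤ C

/-- The interleaved closure of a set of generalized points. -/
def interleaved {E : Type*} [SeminormedAddGroup E] (A : Set (ℝ → E)) : Set (ℝ → E) :=
  {x | ∃ (m : ℕ) (S : Fin m → Set ℝ) (y : Fin m → ℝ → E),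
    (∀ ε ∈ Set.Ioo (0:ℝ) 1, ∃! j, ε ∈ S j) ∧ (∀ j, y j ∈ A) ∧
    ∀ ε ∈ Set.Ioo (0:ℝ) 1, ∀ j, ε ∈ S j → x ε = y j ε}

/-- A net of smooth functions (smooth for each ε ∈ (0,1)). -/
def SmoothNet {V : Type*} [NormedAddCommGroup V] [NormedSpace ℝ V] (u : ℝ → V → ℂ) : Prop :=
  ∀ ε : ℝ, 0 < ε → ε < 1 → ContDiff ℝ (⊤ : ℕ∞) (u ε)

/-- The nets belonging to `E_M(A)` : all derivatives are moderate along the points of `A`. -/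
def EMod {V : Type*} [NormedAddCommGroup V] [NormedSpace ℝ V]
    (A : Set (ℝ → V)) (u : ℝ → V → ℂ) : Prop :=
  SmoothNet u ∧ ∀ (n : ℕ) (x : ℝ → V), IsReprOfPointOf A x →
    Moderate fun ε => iteratedFDeriv ℝ n (u ε) (x ε)

/-- The nets belonging to `N(A)` : all derivatives are negligible along the points of `A`. -/
def NNeg {V : Type*} [NormedAddCommGroup V] [NormedSpace ℝ V]
    (A : Set (ℝ → V)) (u : ℝ → V → ℂ) : Prop :=
  SmoothNet u ∧ ∀ (n : ℕ) (x : ℝ → V), IsReprOfPointOf A x →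
    Negligible fun ε => iteratedFDeriv ℝ n (u ε) (x ε)

/-- `u` and `v` define the same element of `G̃(A)`. -/
def GEq {V : Type*} [NormedAddCommGroup V] [NormedSpace ℝ V]
    (A : Set (ℝ → V)) (u v : ℝ → V → ℂ) : Prop :=
  NNeg A fun ε z => u ε z - v ε z

/-- `x̃ ≤ ỹ` in `R̃` (for the given representatives). -/
def RleNet (x y : ℝ → ℝ) : Prop := ∀ m : ℕ, EvSmall fun ε => x ε ≤ y ε + ε ^ (m : ℝ)

/-- `x̃ ≫ 0` in `R̃`. -/
def StrPosNet (x : ℝ → ℝ) : Prop := ∃ m : ℕ, EvSmall fun ε => ε ^ (m : ℝ) ≤ x ε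

/-- `x̃ ≪ ỹ` in `R̃`. -/
def RltlNet (x y : ℝ → ℝ) : Prop := StrPosNet fun ε => y ε - x ε

/-- The operator `∂̄ = ½(∂ₓ + i ∂_y)` on smooth functions `ℂ → ℂ`. -/
def dbar (u : ℂ → ℂ) (z : ℂ) : ℂ :=
  (fderiv ℝ u z 1 + Complex.I * fderiv ℝ u z Complex.I) / 2

/-- The iterated derivative `D^k u = ∂ₓ^k u`. -/
def Dpow : ℕ → (ℂ → ℂ) → ℂ → ℂ
  | 0, u => u
  | (k+1), u => Dpow k fun z => fderiv ℝ u z 1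

/-- `u ∈ G̃_H(A)` : generalized holomorphic functions on `A ⊆ C̃`. -/
def GHol (A : Set (ℝ → ℂ)) (u : ℝ → ℂ → ℂ) : Prop :=
  EMod A u ∧ NNeg A fun ε => dbar (u ε)

/-- A continuous, piecewise `C¹` function on `[0,1]` (with its partition). -/
structure PwC1Path where
  toFun : ℝ → ℂ
  n : ℕ
  pt : Fin (n + 1) → ℝ
  mono : Monotone pt
  first : pt 0 = 0
  last : pt (Fin.last n) = 1
  cont : ContinuousOn toFun (Set.Icc 0 1)
  piece : ∀ i : Fin n, ContDiffOn ℝ 1 toFun (Set.Icc (pt i.castSucc) (pt i.succ))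

/-- A net of piecewise `C¹` paths which is moderate for the `C¹_pw` norm. -/
def PathModerate (γ : ℝ → PwC1Path) : Prop :=
  (∃ N : ℕ, EvSmall fun ε => ∀ t ∈ Set.Icc (0:ℝ) 1, ‖(γ ε).toFun t‖ ≤ ε ^ (-(N:ℝ))) ∧
  (∃ N : ℕ, EvSmall fun ε => ∀ᵐ t ∂(volume.restrict (Set.Icc (0:ℝ) 1)),
      ‖deriv (γ ε).toFun t‖ ≤ ε ^ (-(N:ℝ)))

/-- Two nets of paths represent the same generalized path
(their difference is negligible for the `C¹_pw` norm). -/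
def PathEqv (γ γ' : ℝ → PwC1Path) : Prop :=
  ∀ m : ℕ, EvSmall fun ε =>
    (∀ t ∈ Set.Icc (0:ℝ) 1, ‖(γ ε).toFun t - (γ' ε).toFun t‖ ≤ ε ^ (m:ℝ)) ∧
    (∀ᵐ t ∂(volume.restrict (Set.Icc (0:ℝ) 1)),
      ‖deriv (γ ε).toFun t - deriv (γ' ε).toFun t‖ ≤ ε ^ (m:ℝ))

/-- `γ` is a (generalized) path in `A ⊆ C̃`. -/
def PathIn (A : Set (ℝ → ℂ)) (γ : ℝ → PwC1Path) : Prop :=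
  PathModerate γ ∧ ∀ t : ℝ → ℝ, (∀ ε, t ε ∈ Set.Icc (0:ℝ) 1) →
    IsReprOfPointOf A fun ε => (γ ε).toFun (t ε)

/-- The complex path integral `∫_γ u(z) dz` along a piecewise `C¹` path. -/
noncomputable def pathIntegral (γ : PwC1Path) (u : ℂ → ℂ) : ℂ :=
  ∑ i : Fin γ.n, ∫ t in (γ.pt i.castSucc)..(γ.pt i.succ),
    u (γ.toFun t) * derivWithin γ.toFun (Set.Icc (γ.pt i.castSucc) (γ.pt i.succ)) t

/-- The path is closed: `γ(0) = γ(1)` as generalized points. -/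
def ClosedPath (γ : ℝ → PwC1Path) : Prop :=
  Negligible fun ε => (γ ε).toFun 1 - (γ ε).toFun 0

/-- A continuous, piecewise `C¹` function on `[0,1]²` (with its grid partition). -/
structure PwC1Homotopy where
  toFun : ℝ × ℝ → ℂ
  n : ℕ
  pt : Fin (n + 1) → ℝ
  mono : Monotone pt
  first : pt 0 = 0
  last : pt (Fin.last n) = 1
  cont : ContinuousOn toFun (Set.Icc 0 1 ×ˢ Set.Icc 0 1)
  piece : ∀ i j : Fin n, ContDiffOn ℝ 1 toFun
    (Set.Icc (pt i.castSucc) (pt i.succ) ×ˢ Set.Icc (pt j.castSucc) (pt j.succ))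

/-- A moderate net of piecewise `C¹` functions on the square. -/
def HomotopyModerate (H : ℝ → PwC1Homotopy) : Prop :=
  (∃ N : ℕ, EvSmall fun ε => ∀ p ∈ (Set.Icc (0:ℝ) 1 ×ˢ Set.Icc (0:ℝ) 1),
      ‖(H ε).toFun p‖ ≤ ε ^ (-(N:ℝ))) ∧
  (∃ N : ℕ, EvSmall fun ε =>
      ∀ᵐ p ∂(volume.restrict ((Set.Icc (0:ℝ) 1 ×ˢ Set.Icc (0:ℝ) 1) : Set (ℝ × ℝ))),
      ‖fderiv ℝ (H ε).toFun p‖ ≤ ε ^ (-(N:ℝ)))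

/-- `H` is a homotopy in `A` between the closed paths `γ` and `γ'`. -/
def IsHomotopyBetween (A : Set (ℝ → ℂ)) (γ γ' : ℝ → PwC1Path)
    (H : ℝ → PwC1Homotopy) : Prop :=
  HomotopyModerate H ∧
  (∀ t : ℝ → ℝ, (∀ ε, t ε ∈ Set.Icc (0:ℝ) 1) →
    (Negligible fun ε => (H ε).toFun (t ε, 0) - (γ ε).toFun (t ε)) ∧
    (Negligible fun ε => (H ε).toFun (t ε, 1) - (γ' ε).toFun (t ε))) ∧
  (∀ s : ℝ → ℝ, (∀ ε, s ε ∈ Set.Icc (0:ℝ) 1) →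
    Negligible fun ε => (H ε).toFun (0, s ε) - (H ε).toFun (1, s ε)) ∧
  (∀ t s : ℝ → ℝ, (∀ ε, t ε ∈ Set.Icc (0:ℝ) 1) → (∀ ε, s ε ∈ Set.Icc (0:ℝ) 1) →
    IsReprOfPointOf A fun ε => (H ε).toFun (t ε, s ε))

/-- `u ∈ G̃^∞(A)` : at each point of `A` all derivatives are bounded by a single power `ρ^{-N}`. -/
def GInfty {V : Type*} [NormedAddCommGroup V] [NormedSpace ℝ V]
    (A : Set (ℝ → V)) (u : ℝ → V → ℂ) : Prop :=
  ∀ x : ℝ → V, IsReprOfPointOf A x → ∃ N : ℕ, ∀ n : ℕ,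
    RleNet (fun ε => ‖iteratedFDeriv ℝ n (u ε) (x ε)‖) (fun ε => ε ^ (-(N : ℝ)))

open Topology

theorem evSmall_iff_eventually {P : ℝ → Prop} : EvSmall P ↔ ∀ᶠ ε in 𝓝[>] 0, P ε := by
  constructor
  · rintro ⟨ε₀, hε₀, -, hP⟩
    filter_upwards [Ioc_mem_nhdsGT hε₀] with ε hε using hP ε hε.1 hε.2
  · intro h
    obtain ⟨δ, hδ, hsub⟩ := mem_nhdsGT_iff_exists_Ioc_subset.1 h
    refine ⟨min δ (1 / 2), lt_min hδ (by norm_num), (min_le_right _ _).trans_lt (by norm_num),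
      fun ε hε hεδ => hsub ⟨hε, hεδ.trans (min_le_left _ _)⟩⟩

theorem eventually_mem_Ioc_half : ∀ᶠ ε in 𝓝[>] (0 : ℝ), ε ∈ Ioc 0 (1 / 2) :=
  Ioc_mem_nhdsGT (by norm_num)

theorem rpow_neg_natCast_add_one_le {ε : ℝ} (hε : ε ∈ Ioc 0 (1 / 2)) (N : ℕ) :
    ε ^ (-(N : ℝ)) + 1 ≤ ε ^ (-((N + 1 : ℕ) : ℝ)) := by
  have hpow : 1 ≤ ε ^ (-(N : ℝ)) :=
    one_le_rpow_of_pos_of_le_one_of_nonpos hε.1 (by linarith [hε.2]) (by simp)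
  have hinv : 2 ≤ ε⁻¹ := by rw [le_inv_comm₀ two_pos hε.1]; linarith [hε.2]
  have hsplit : ε ^ (-((N + 1 : ℕ) : ℝ)) = ε ^ (-(N : ℝ)) * ε⁻¹ := by
    rw [← rpow_neg_one, ← rpow_add hε.1]; push_cast; ring_nf
  rw [hsplit]
  nlinarith

theorem two_mul_rpow_natCast_succ_le {ε : ℝ} (hε : ε ∈ Ioc 0 (1 / 2)) (m : ℕ) :
    2 * ε ^ ((m + 1 : ℕ) : ℝ) ≤ ε ^ (m : ℝ) := by
  rw [rpow_natCast, rpow_natCast, pow_succ]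
  nlinarith [pow_pos hε.1 m, hε.2]

theorem Negligible.add {E : Type*} [SeminormedAddGroup E] {x y : ℝ → E}
    (hx : Negligible x) (hy : Negligible y) : Negligible fun ε => x ε + y ε := by
  intro m
  have hx' := hx (m + 1)
  have hy' := hy (m + 1)
  rw [evSmall_iff_eventually] at hx' hy' ⊢
  filter_upwards [hx', hy', eventually_mem_Ioc_half] with ε hxε hyε hε
  calc ‖x ε + y ε‖ ≤ ‖x ε‖ + ‖y ε‖ := norm_add_le _ _
    _ ≤ 2 * ε ^ ((m + 1 : ℕ) : ℝ) := by linarith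
    _ ≤ ε ^ (m : ℝ) := two_mul_rpow_natCast_succ_le hε m

theorem EqvNet.refl {E : Type*} [SeminormedAddGroup E] (x : ℝ → E) : EqvNet x x := fun m =>
  ⟨1 / 2, by norm_num, by norm_num, fun ε hε _ => by
    simp only [sub_self, norm_zero]; exact (rpow_pos_of_pos hε _).le⟩

theorem EqvNet.symm {E : Type*} [SeminormedAddGroup E] {x y : ℝ → E} (h : EqvNet x y) :
    EqvNet y x := by
  simpa only [EqvNet, Negligible, norm_sub_rev] using h

theorem EqvNet.trans {E : Type*} [SeminormedAddGroup E] {x y z : ℝ → E}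
    (hxy : EqvNet x y) (hyz : EqvNet y z) : EqvNet x z := by
  simpa only [EqvNet, sub_add_sub_cancel] using hxy.add hyz

theorem Moderate.of_eqvNet {E : Type*} [SeminormedAddGroup E] {x y : ℝ → E}
    (hx : Moderate x) (h : EqvNet y x) : Moderate y := by
  obtain ⟨N, hN⟩ := hx
  have h0 := h 0
  refine ⟨N + 1, ?_⟩
  rw [evSmall_iff_eventually] at hN h0 ⊢
  filter_upwards [hN, h0, eventually_mem_Ioc_half] with ε hxε hyxε hε
  calc ‖y ε‖ ≤ ‖x ε‖ + ‖y ε - x ε‖ := norm_le_insert' _ _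
    _ ≤ ε ^ (-(N : ℝ)) + 1 := by simp only [CharP.cast_eq_zero, rpow_zero] at hyxε; linarith
    _ ≤ ε ^ (-((N + 1 : ℕ) : ℝ)) := rpow_neg_natCast_add_one_le hε N

theorem EqvNet.of_mem_segment {E : Type*} [SeminormedAddCommGroup E] [NormedSpace ℝ E]
    {x y z : ℝ → E} (h : EqvNet x y) (hz : ∀ᶠ ε in 𝓝[>] 0, z ε ∈ segment ℝ (x ε) (y ε)) :
    EqvNet z y := by
  intro m
  have hm := h m
  rw [evSmall_iff_eventually] at hm ⊢
  filter_upwards [hm, hz] with ε hmε hzε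
  obtain ⟨a, b, ha, hb, hab, hzab⟩ := hzε
  obtain rfl : b = 1 - a := by linarith
  calc ‖z ε - y ε‖ = ‖a • (x ε - y ε)‖ := by
        rw [← hzab, smul_sub, sub_smul, one_smul]; congr 1; abel
    _ = a * ‖x ε - y ε‖ := by rw [norm_smul, Real.norm_of_nonneg ha]
    _ ≤ ‖x ε - y ε‖ := mul_le_of_le_one_left (norm_nonneg _) (by linarith)
    _ ≤ ε ^ (m : ℝ) := hmε

theorem Moderate.norm_mul_norm_negligible {E F : Type*} [SeminormedAddGroup E]
    [SeminormedAddGroup F] {x : ℝ → E} {y : ℝ → F} (hx : Moderate x) (hy : Negligible y) :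
    Negligible fun ε => ‖x ε‖ * ‖y ε‖ := by
  obtain ⟨N, hN⟩ := hx
  intro m
  have hmN := hy (m + N)
  rw [evSmall_iff_eventually] at hN hmN ⊢
  filter_upwards [hN, hmN, self_mem_nhdsWithin] with ε hxε hyε (hε : 0 < ε)
  calc ‖‖x ε‖ * ‖y ε‖‖ = ‖x ε‖ * ‖y ε‖ := Real.norm_of_nonneg (by positivity)
    _ ≤ ε ^ (-(N : ℝ)) * ε ^ ((m + N : ℕ) : ℝ) :=
        mul_le_mul hxε hyε (norm_nonneg _) (rpow_nonneg hε.le _)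
    _ = ε ^ (m : ℝ) := by rw [← rpow_add hε]; push_cast; ring_nf

theorem SharplyBddRep.moderate {E : Type*} [SeminormedAddGroup E] {Aε : ℝ → Set E}
    (hbd : SharplyBddRep Aε) {x : ℝ → E} (hx : EvSmall fun ε => x ε ∈ Aε ε) : Moderate x := by
  obtain ⟨M, hM⟩ := hbd
  refine ⟨M, ?_⟩
  rw [evSmall_iff_eventually] at hM hx ⊢
  filter_upwards [hM, hx] with ε hMε hxε using hMε _ hxε

theorem mem_internalSet {E : Type*} [SeminormedAddGroup E] {Aε : ℝ → Set E} {x : ℝ → E}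
    (hx : Moderate x) (hxA : EvSmall fun ε => x ε ∈ Aε ε) : x ∈ InternalSet Aε :=
  ⟨hx, x, EqvNet.refl x, hxA⟩

section MeanValue

variable {V F : Type*} [NormedAddCommGroup V] [NormedSpace ℝ V]
  [NormedAddCommGroup F] [NormedSpace ℝ F]

theorem exists_mem_segment_norm_sub_le {g : V → F} (hg : ContDiff ℝ 1 g) (x y : V) :
    ∃ z ∈ segment ℝ x y, ‖g x - g y‖ ≤ ‖fderiv ℝ g z‖ * ‖x - y‖ := by
  have hcompact : IsCompact (segment ℝ x y) := by
    rw [segment_eq_image]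
    exact isCompact_Icc.image (by fun_prop)
  obtain ⟨z, hz, hmax⟩ := hcompact.exists_isMaxOn ⟨x, left_mem_segment ℝ x y⟩
    (hg.continuous_fderiv one_ne_zero).norm.continuousOn
  exact ⟨z, hz, (convex_segment x y).norm_image_sub_le_of_norm_fderiv_le
    (fun w _ => (hg.differentiable one_ne_zero).differentiableAt) (fun w hw => hmax hw)
    (right_mem_segment ℝ x y) (left_mem_segment ℝ x y)⟩

theorem exists_mem_segment_norm_iteratedFDeriv_le {f : V → F} {n : ℕ}
    (hf : ContDiff ℝ (n + 1) f) (x y : V) :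
    ∃ z ∈ segment ℝ x y, ‖iteratedFDeriv ℝ n f x‖ ≤
      ‖iteratedFDeriv ℝ n f y‖ + ‖iteratedFDeriv ℝ (n + 1) f z‖ * ‖x - y‖ := by
  obtain ⟨z, hz, hle⟩ :=
    exists_mem_segment_norm_sub_le (hf.iteratedFDeriv_right (m := 1) (by rw [add_comm])) x y
  rw [norm_fderiv_iteratedFDeriv] at hle
  exact ⟨z, hz, by linarith [norm_sub_norm_le (iteratedFDeriv ℝ n f x) (iteratedFDeriv ℝ n f y)]⟩

end MeanValue

theorem frequently_dyadic_of_frequently {Q : ℝ → Prop} (h : ∃ᶠ ε in 𝓝[>] (0 : ℝ), Q ε) :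
    ∃ᶠ i in atTop, ∃ ε ∈ Ioc ((1 / 2 : ℝ) ^ (i + 1)) ((1 / 2) ^ i), Q ε := by
  rw [frequently_atTop]
  intro a
  obtain ⟨ε, hQ, hε, hεa⟩ :=
    (h.and_eventually (Ioo_mem_nhdsGT (pow_pos (by norm_num : (0 : ℝ) < 1 / 2) a))).exists
  obtain ⟨i, hi, hi'⟩ := exists_nat_pow_near_of_lt_one hε
    (hεa.le.trans (pow_le_one₀ (by norm_num) (by norm_num)))
    (by norm_num : (0 : ℝ) < 1 / 2) (by norm_num)
  have hai : a < i + 1 := (pow_lt_pow_iff_right_of_lt_one₀ (by norm_num) (by norm_num)).1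
    (hi.trans hεa)
  exact ⟨i, by omega, ε, ⟨hi, hi'⟩, hQ⟩

theorem exists_strictAnti_tendsto_of_frequently {Q : ℕ → ℝ → Prop}
    (h : ∀ k, ∃ᶠ ε in 𝓝[>] (0 : ℝ), Q k ε) :
    ∃ e : ℕ → ℝ, StrictAnti e ∧ Tendsto e atTop (𝓝[>] 0) ∧ ∀ k, Q k (e k) := by
  obtain ⟨φ, hφ, hφQ⟩ :=
    extraction_forall_of_frequently fun k => frequently_dyadic_of_frequently (h k)
  -- `e k` lies in the dyadic window of index `φ k`; these windows are disjoint and shrink to `0`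
  choose e he heQ using hφQ
  have he0 : ∀ k, 0 < e k := fun k => (pow_pos (by norm_num) _).trans (he k).1
  refine ⟨e, fun k l hkl => ?_, tendsto_nhdsWithin_iff.2 ⟨?_, Eventually.of_forall he0⟩, heQ⟩
  · calc e l ≤ (1 / 2) ^ φ l := (he l).2
      _ ≤ (1 / 2) ^ (φ k + 1) := pow_le_pow_of_le_one (by norm_num) (by norm_num) (hφ hkl)
      _ < e k := (he k).1
  · exact squeeze_zero (fun k => (he0 k).le) (fun k => (he k).2)
      ((tendsto_pow_atTop_nhds_zero_of_lt_one (by norm_num) (by norm_num)).comp hφ.tendsto_atTop)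

theorem exists_net_eventually_mem_frequently_mem {V : Type*} {G : ℝ → Set V}
    {B : ℕ → ℝ → Set V} (hG : ∀ᶠ ε in 𝓝[>] (0 : ℝ), (G ε).Nonempty) (hBG : ∀ j ε, B j ε ⊆ G ε)
    (hB : ∀ j, ∃ᶠ ε in 𝓝[>] (0 : ℝ), (B j ε).Nonempty) :
    ∃ x : ℝ → V, (∀ᶠ ε in 𝓝[>] 0, x ε ∈ G ε) ∧ ∀ j, ∃ᶠ ε in 𝓝[>] 0, x ε ∈ B j ε := by
  obtain ⟨e, he, he0, heB⟩ := exists_strictAnti_tendsto_of_frequently fun k => hB k.unpair.1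
  have : Nonempty V := let ⟨_, v, _⟩ := hG.exists; ⟨v⟩
  -- the point `e k` serves the family `k.unpair.1`, so every family is served infinitely often
  let P : ℝ → V → Prop := fun ε v => v ∈ G ε ∧ ∀ k, e k = ε → v ∈ B k.unpair.1 ε
  have hP : ∀ ε, (G ε).Nonempty → ∃ v, P ε v := by
    intro ε hε
    by_cases hk : ∃ k, e k = ε
    · obtain ⟨k, rfl⟩ := hk
      obtain ⟨v, hv⟩ := heB k
      exact ⟨v, hBG _ _ hv, fun k' hk' => he.injective hk' ▸ hv⟩
    · obtain ⟨v, hv⟩ := hε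
      exact ⟨v, hv, fun k hk' => absurd ⟨k, hk'⟩ hk⟩
  refine ⟨fun ε => Classical.epsilon (P ε),
    hG.mono fun ε hε => (Classical.epsilon_spec (hP ε hε)).1, fun j => ?_⟩
  have hj : Tendsto (fun i => e (Nat.pair j i)) atTop (𝓝[>] 0) :=
    he0.comp (tendsto_atTop_mono (Nat.right_le_pair j) tendsto_id)
  refine hj.frequently (Frequently.of_forall fun i => ?_)
  have hspec := Classical.epsilon_spec (hP _ ((heB (Nat.pair j i)).mono (hBG _ _)))
  simpa using hspec.2 _ rfl

section GInfty

variable {V : Type*} [NormedAddCommGroup V] [NormedSpace ℝ V] {A : Set (ℝ → V)}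
  {Aε : ℝ → Set V} {u : ℝ → V → ℂ}

theorem gInfty_of_uniform_bound (hA : A = InternalSet Aε) (hu : EMod A u) {N : ℕ}
    (hN : ∀ n : ℕ, EvSmall fun ε => ∀ x ∈ Aε ε, ‖iteratedFDeriv ℝ n (u ε) x‖ ≤ ε ^ (-(N : ℝ))) :
    GInfty A u := by
  subst hA
  rintro x ⟨-, a, ⟨ha, y, hay, hyA⟩, hxa⟩
  have hxy : EqvNet x y := hxa.trans hay
  have hy : Moderate y := ha.of_eqvNet hay.symm
  refine ⟨N, fun n m => ?_⟩
  choose! z hzxy hz using fun ε (hε : ε ∈ Ioo (0 : ℝ) 1) =>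
    exists_mem_segment_norm_iteratedFDeriv_le (n := n)
      ((hu.1 ε hε.1 hε.2).of_le (mod_cast le_top)) (x ε) (y ε)
  have hzy : EqvNet z y := hxy.of_mem_segment <| by
    filter_upwards [Ioo_mem_nhdsGT one_pos] with ε hε using hzxy ε hε
  have hDz := hu.2 (n + 1) z ⟨hy.of_eqvNet hzy, y, mem_internalSet hy hyA, hzy⟩
  have hprod := hDz.norm_mul_norm_negligible hxy m
  have hNn := hN n
  rw [evSmall_iff_eventually] at hprod hNn hyA ⊢
  filter_upwards [hNn, hyA, hprod, Ioo_mem_nhdsGT one_pos] with ε hNε hyε hprodε hε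
  calc ‖iteratedFDeriv ℝ n (u ε) (x ε)‖
      ≤ ‖iteratedFDeriv ℝ n (u ε) (y ε)‖ +
        ‖iteratedFDeriv ℝ (n + 1) (u ε) (z ε)‖ * ‖x ε - y ε‖ := hz ε hε
    _ ≤ ε ^ (-(N : ℝ)) + ε ^ (m : ℝ) := add_le_add (hNε _ hyε) ((le_abs_self _).trans hprodε)

theorem exists_uniform_bound_of_gInfty (hA : A = InternalSet Aε) (hne : A.Nonempty)
    (hbd : SharplyBddRep Aε) (hinf : GInfty A u) :
    ∃ N : ℕ, ∀ n : ℕ, EvSmall fun ε =>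
      ∀ x ∈ Aε ε, ‖iteratedFDeriv ℝ n (u ε) x‖ ≤ ε ^ (-(N : ℝ)) := by
  subst hA
  by_contra hcon
  simp only [not_exists, not_forall, evSmall_iff_eventually, not_eventually, not_le,
    exists_prop] at hcon
  choose n hn using hcon
  have hG : ∀ᶠ ε in 𝓝[>] (0 : ℝ), (Aε ε).Nonempty := by
    obtain ⟨-, ⟨-, y, -, hy⟩⟩ := hne
    rw [evSmall_iff_eventually] at hy
    exact hy.mono fun ε hyε => ⟨y ε, hyε⟩
  obtain ⟨x, hxA, hxB⟩ := exists_net_eventually_mem_frequently_mem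
    (B := fun N ε => {v ∈ Aε ε | ε ^ (-(N : ℝ)) < ‖iteratedFDeriv ℝ (n N) (u ε) v‖})
    hG (fun _ _ _ hv => hv.1) (fun N => (hn N).mono fun _ ⟨v, hv, hlt⟩ => ⟨v, hv, hlt⟩)
  rw [← evSmall_iff_eventually] at hxA
  obtain ⟨N, hN⟩ := hinf x ⟨hbd.moderate hxA, x, mem_internalSet (hbd.moderate hxA) hxA,
    EqvNet.refl x⟩
  have hle := hN (n (N + 1)) 0
  rw [evSmall_iff_eventually] at hle
  obtain ⟨ε, ⟨-, hlt⟩, hleε, hε⟩ :=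
    ((hxB (N + 1)).and_eventually (hle.and eventually_mem_Ioc_half)).exists
  have := rpow_neg_natCast_add_one_le hε N
  simp only [CharP.cast_eq_zero, rpow_zero] at hleε
  linarith

end GInfty

theorem GInfty_internal_sharplyBounded_general (d : ℕ)
    (A : Set (ℝ → EuclideanSpace ℝ (Fin d)))
    (Aε : ℝ → Set (EuclideanSpace ℝ (Fin d)))
    (hA : A = InternalSet Aε) (hne : A.Nonempty)
    (hbd : SharplyBddRep Aε)
    (u : ℝ → EuclideanSpace ℝ (Fin d) → ℂ) (hu : EMod A u) :
    GInfty A u ↔ ∃ N : ℕ, ∀ n : ℕ, EvSmall fun ε =>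
      ∀ x ∈ Aε ε, ‖iteratedFDeriv ℝ n (u ε) x‖ ≤ ε ^ (-(N : ℝ)) :=
  ⟨exists_uniform_bound_of_gInfty hA hne hbd, fun ⟨_, hN⟩ => gInfty_of_uniform_bound hA hu hN⟩

/-- Proposition 3.16: characterization of `G̃^∞(A)` for internal sharply bounded `A`. -/
theorem GInfty_internal_sharplyBounded (d : ℕ)
    (A : Set (ℝ → EuclideanSpace ℝ (Fin d)))
    (Aε : ℝ → Set (EuclideanSpace ℝ (Fin d)))
    (hA : A = InternalSet Aε) (hne : A.Nonempty)
    (hbdA : SharplyBddSet A) (hbd : SharplyBddRep Aε)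
    (u : ℝ → EuclideanSpace ℝ (Fin d) → ℂ) (hu : EMod A u) :
    GInfty A u ↔ ∃ N : ℕ, ∀ n : ℕ, EvSmall fun ε =>
      ∀ x ∈ Aε ε, ‖iteratedFDeriv ℝ n (u ε) x‖ ≤ ε ^ (-(N : ℝ)) :=
  GInfty_internal_sharplyBounded_general d A Aε hA hne hbd u hu

end
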